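/- Let {F_n} be a sequence in Δ⁺ and let F ∈ Δ⁺. Then {F_n} converges weakly to F (i.e., F_n(x) → F(x) at every continuity point x of F) if and only if d_L(F_n, F) → 0 as n → ∞. -/

import Mathlib

/-!
Continuity points of a monotone `G` are dense, so finitely many of them form an `h/2`-net of a
neighbourhood of `[-1/h, 1/h]`. Once `F n` is `h`-close to `G` at these points, every such `x` is
bracketed by two net points in `[x - h, x]` and `[x, x + h]`, and monotonicity of both functions
turns this into `(F n, G; h)` and `(G, F n; h)`. Conversely, `(G, F n; h)` squeezes `F n x` between
`G (x - h) - h` and `G (x + h) + h`, which both tend to `G x` as `h → 0⁺` when `G` is continuous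
at `x`.
-/

open Set Filter Topology

/-- A distance distribution function: nondecreasing, left-continuous,
with values in `[0,1]`, and vanishing on `(-∞, 0]`. -/
def IsDDF (F : ℝ → ℝ) : Prop :=
  Monotone F ∧ (∀ x : ℝ, ContinuousWithinAt F (Set.Iio x) x) ∧
    (∀ x, 0 ≤ F x ∧ F x ≤ 1) ∧ ∀ x ≤ 0, F x = 0

/-- The condition `(F, G; h)` in the definition of the modified Lévy distance. -/
def LevyCond (F G : ℝ → ℝ) (h : ℝ) : Prop :=
  ∀ x ∈ Set.Ioo (-(1 / h)) (1 / h), F (x - h) - h ≤ G x ∧ G x ≤ F (x + h) + h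

/-- The modified Lévy distance on `Δ⁺`. -/
noncomputable def dL (F G : ℝ → ℝ) : ℝ :=
  sInf {h : ℝ | h ∈ Set.Ioc (0 : ℝ) 1 ∧ LevyCond F G h ∧ LevyCond G F h}

/-- The distribution function `H₀`, equal to `0` on `(-∞, 0]` and `1` on `(0, ∞)`. -/
noncomputable def H0 : ℝ → ℝ := fun x => if x ≤ 0 then 0 else 1

def levySet (F G : ℝ → ℝ) : Set ℝ :=
  {h : ℝ | h ∈ Set.Ioc (0 : ℝ) 1 ∧ LevyCond F G h ∧ LevyCond G F h}

theorem Dense.exists_finite_subset_dist_lt {X : Type*} [PseudoMetricSpace X] {D K : Set X}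
    (hD : Dense D) (hK : IsCompact K) {r : ℝ} (hr : 0 < r) :
    ∃ S ⊆ D, S.Finite ∧ ∀ x ∈ K, ∃ y ∈ S, dist x y < r := by
  have hcover : K ⊆ ⋃ y ∈ D, Metric.ball y r := by
    rw [(Metric.dense_iff_iUnion_ball D).1 hD r hr]
    exact subset_univ K
  obtain ⟨S, hSD, hS, hKS⟩ := hK.elim_finite_subcover_image (fun _ _ => Metric.isOpen_ball) hcover
  refine ⟨S, hSD, hS, fun x hx => ?_⟩
  obtain ⟨y, hy, hxy⟩ := mem_iUnion₂.1 (hKS hx)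
  exact ⟨y, hy, hxy⟩

theorem Monotone.dense_setOf_continuousAt {G : ℝ → ℝ} (hG : Monotone G) :
    Dense {x | ContinuousAt G x} := by
  simpa only [compl_ofPred, not_not] using hG.countable_not_continuousAt.dense_compl ℝ

namespace LevyCond

variable {F G : ℝ → ℝ} {h : ℝ}

theorem mono (hF : Monotone F) (h0 : 0 < h) {h' : ℝ} (hh' : h ≤ h') (hc : LevyCond F G h) :
    LevyCond F G h' := by
  intro x hx
  have hx' : x ∈ Ioo (-(1 / h)) (1 / h) := by
    have := one_div_le_one_div_of_le h0 hh'
    exact ⟨by linarith [hx.1], hx.2.trans_le this⟩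
  have hlo := hF (show x - h' ≤ x - h by linarith)
  have hhi := hF (show x + h ≤ x + h' by linarith)
  constructor <;> linarith [hc x hx']

theorem one (hF : ∀ x, 0 ≤ F x ∧ F x ≤ 1) (hG : ∀ x, 0 ≤ G x ∧ G x ≤ 1) : LevyCond F G 1 :=
  fun x _ => ⟨by linarith [hF (x - 1), hG x], by linarith [hF (x + 1), hG x]⟩

theorem of_bracket (hF : Monotone F) (hG : Monotone G)
    (hbr : ∀ x ∈ Ioo (-(1 / h)) (1 / h), ∃ p ∈ Icc (x - h) x, ∃ q ∈ Icc x (x + h),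
      |F p - G p| ≤ h ∧ |F q - G q| ≤ h) :
    LevyCond F G h ∧ LevyCond G F h := by
  refine ⟨fun x hx => ?_, fun x hx => ?_⟩ <;>
  · obtain ⟨p, hp, q, hq, hFGp, hFGq⟩ := hbr x hx
    rw [abs_le] at hFGp hFGq
    have := hF hp.1; have := hF hp.2; have := hF hq.1; have := hF hq.2
    have := hG hp.1; have := hG hp.2; have := hG hq.1; have := hG hq.2
    constructor <;> linarith

end LevyCond

section dL

variable {F G : ℝ → ℝ} {h : ℝ}

theorem dL_nonneg : 0 ≤ dL F G :=
  Real.sInf_nonneg fun _ hk => hk.1.1.le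

theorem dL_le_of_levyCond (h0 : 0 < h) (h1 : h ≤ 1) (hFG : LevyCond F G h)
    (hGF : LevyCond G F h) : dL F G ≤ h :=
  csInf_le (s := levySet F G) ⟨0, fun _ hk => hk.1.1.le⟩ ⟨⟨h0, h1⟩, hFG, hGF⟩

theorem levyCond_of_dL_lt (hF : Monotone F) (hG : Monotone G)
    (hF01 : ∀ x, 0 ≤ F x ∧ F x ≤ 1) (hG01 : ∀ x, 0 ≤ G x ∧ G x ≤ 1)
    (hlt : dL F G < h) : LevyCond F G h ∧ LevyCond G F h := by
  have hne : (levySet F G).Nonempty :=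
    ⟨1, ⟨zero_lt_one, le_rfl⟩, LevyCond.one hF01 hG01, LevyCond.one hG01 hF01⟩
  obtain ⟨k, ⟨⟨hk0, -⟩, hFG, hGF⟩, hkh⟩ := exists_lt_of_csInf_lt hne hlt
  exact ⟨hFG.mono hF hk0 hkh.le, hGF.mono hG hk0 hkh.le⟩

end dL

section Convergence

variable {ι : Type*} {l : Filter ι} {F : ι → ℝ → ℝ} {G : ℝ → ℝ}

theorem eventually_levyCond_of_tendsto (hF : ∀ i, Monotone (F i)) (hG : Monotone G)
    (hw : ∀ x, ContinuousAt G x → Tendsto (fun i => F i x) l (𝓝 (G x))) {h : ℝ} (h0 : 0 < h) :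
    ∀ᶠ i in l, LevyCond (F i) G h ∧ LevyCond G (F i) h := by
  obtain ⟨S, hSc, hS, hnet⟩ := hG.dense_setOf_continuousAt.exists_finite_subset_dist_lt
    (isCompact_Icc (a := -(1 / h) - h / 2) (b := 1 / h + h / 2)) (half_pos h0)
  have hclose : ∀ᶠ i in l, ∀ y ∈ S, |F i y - G y| ≤ h :=
    (eventually_all_finite hS).2 fun y hy =>
      (hw y (hSc hy)).eventually (Metric.closedBall_mem_nhds (G y) h0)
  filter_upwards [hclose] with i hi
  refine LevyCond.of_bracket (hF i) hG fun x hx => ?_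
  obtain ⟨p, hpS, hp⟩ := hnet (x - h / 2) ⟨by linarith [hx.1], by linarith [hx.2]⟩
  obtain ⟨q, hqS, hq⟩ := hnet (x + h / 2) ⟨by linarith [hx.1], by linarith [hx.2]⟩
  rw [Real.dist_eq, abs_lt] at hp hq
  exact ⟨p, ⟨by linarith, by linarith⟩, q, ⟨by linarith, by linarith⟩, hi p hpS, hi q hqS⟩

theorem tendsto_dL_of_tendsto_apply (hF : ∀ i, Monotone (F i)) (hG : Monotone G)
    (hw : ∀ x, ContinuousAt G x → Tendsto (fun i => F i x) l (𝓝 (G x))) :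
    Tendsto (fun i => dL (F i) G) l (𝓝 0) := by
  refine tendsto_order.2 ⟨fun a ha => .of_forall fun i => ha.trans_le dL_nonneg,
    fun b hb => ?_⟩
  have h0 : 0 < min (b / 2) 1 := lt_min (half_pos hb) one_pos
  filter_upwards [eventually_levyCond_of_tendsto hF hG hw h0] with i hi
  exact (dL_le_of_levyCond h0 (min_le_right _ _) hi.1 hi.2).trans_lt
    ((min_le_left _ _).trans_lt (half_lt_self hb))

theorem tendsto_apply_of_tendsto_dL (hF : ∀ i, Monotone (F i)) (hG : Monotone G)
    (hF01 : ∀ i x, 0 ≤ F i x ∧ F i x ≤ 1) (hG01 : ∀ x, 0 ≤ G x ∧ G x ≤ 1)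
    (hd : Tendsto (fun i => dL (F i) G) l (𝓝 0)) {x : ℝ} (hx : ContinuousAt G x) :
    Tendsto (fun i => F i x) l (𝓝 (G x)) := by
  have hsqueeze : ∀ h, 0 < h → |x| < 1 / h →
      ∀ᶠ i in l, G (x - h) - h ≤ F i x ∧ F i x ≤ G (x + h) + h := fun h h0 hxh =>
    (hd.eventually (gt_mem_nhds h0)).mono fun i hi =>
      (levyCond_of_dL_lt (hF i) hG (hF01 i) hG01 hi).2 x (abs_lt.1 hxh)
  have hsmall : ∀ᶠ h in 𝓝[>] (0 : ℝ), 0 < h ∧ |x| < 1 / h := by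
    simpa only [one_div, mem_Ioi] using
      eventually_mem_nhdsWithin.and (tendsto_inv_nhdsGT_zero.eventually_gt_atTop |x|)
  have hlimit : ∀ s : ℝ, Tendsto (fun h => G (x + s * h) + s * h) (𝓝[>] 0) (𝓝 (G x)) := by
    intro s
    have hlin : Tendsto (fun h : ℝ => s * h) (𝓝 0) (𝓝 0) := by
      simpa using (tendsto_id (x := 𝓝 (0 : ℝ))).const_mul s
    have hx' : Tendsto (fun h => x + s * h) (𝓝 0) (𝓝 x) := by
      simpa using hlin.const_add x
    simpa using ((hx.tendsto.comp hx').add hlin).mono_left nhdsWithin_le_nhds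
  refine tendsto_order.2 ⟨fun a ha => ?_, fun b hb => ?_⟩
  · obtain ⟨h, ⟨h0, hxh⟩, hah⟩ :=
      (hsmall.and ((hlimit (-1)).eventually (lt_mem_nhds ha))).exists
    filter_upwards [hsqueeze h h0 hxh] with i hi
    have : a < G (x - h) - h := by simpa [sub_eq_add_neg] using hah
    linarith [hi.1]
  · obtain ⟨h, ⟨h0, hxh⟩, hbh⟩ :=
      (hsmall.and ((hlimit 1).eventually (gt_mem_nhds hb))).exists
    filter_upwards [hsqueeze h h0 hxh] with i hi
    have : G (x + h) + h < b := by simpa using hbh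
    linarith [hi.2]

end Convergence

/-- A sequence in `Δ⁺` converges weakly to `F ∈ Δ⁺` (i.e. pointwise at
every continuity point of `F`) iff it converges to `F` in the modified Lévy distance. -/
theorem weak_convergence_iff_dL (F : ℕ → ℝ → ℝ) (G : ℝ → ℝ)
    (hF : ∀ n, IsDDF (F n)) (hG : IsDDF G) :
    (∀ x : ℝ, ContinuousAt G x →
        Filter.Tendsto (fun n => F n x) Filter.atTop (nhds (G x))) ↔
      Filter.Tendsto (fun n => dL (F n) G) Filter.atTop (nhds 0) :=
  ⟨tendsto_dL_of_tendsto_apply (fun n => (hF n).1) hG.1,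
    fun hd _ => tendsto_apply_of_tendsto_dL (fun n => (hF n).1) hG.1 (fun n => (hF n).2.2.1)
      hG.2.2.1 hd⟩
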